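/- Under the delayed-information lower-bound setup for convex losses, for every delayed decision rule (X_t)_{t=1}^T it holds that E[ Σ_{i=0}^{Z} Σ_{t=c_{iK′}+1}^{c_{(i+1)K′}} (n − 2K′ + 1)·⟨w_i, X_t(w_0,…,w_{i−1})⟩ − min_{x∈K} Σ_{i=0}^{Z} (c_{(i+1)K′} − c_{iK′})·(n − 2K′ + 1)·⟨w_i, x⟩ ] ≥ (n − 2K′ + 1)·R·G·T / √(2(Z+1)). -/

import Mathlib

/-!
Statement 5: the expected-regret inequality behind Theorem 2 (lower bound for
convex losses in the delayed-information setup on the 1-connected cycle).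
-/

open scoped BigOperators RealInnerProductSpace
open Finset

noncomputable section

abbrev EV (d : ℕ) := EuclideanSpace ℝ (Fin d)

/-- The random loss vectors: `w_i` has coordinates `±G/√d`, the signs being given
by the Boolean family `ε`. -/
def cornerVec (d Zp : ℕ) (G : ℝ) (ε : Fin Zp → Fin d → Bool) (i : Fin Zp) : EV d :=
  WithLp.toLp 2 (fun j => (if ε i j then (1 : ℝ) else -1) * (G / Real.sqrt d))

/-!
Flipping the signs of `w_i` negates `w_i` but leaves every decision of interval `i` unchanged,
so the learner's total loss averages to zero over the sign patterns. The comparator's loss is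
linear, `x ↦ ⟪s, x⟫` with `s = ∑ i, L i • w_i` (`L i` the length of interval `i`), and its
minimum over the box is `-(R/√d) ∑ j |s j|`. Coordinatewise this leaves `E |∑ i, L i ε_i|`
for Rademacher signs `ε_i`. Testing against `sign (∑ i, ε_i)` and using exchangeability bounds
it below by `T · E |S_N| / N`, where `S_N = ∑ i, ε_i`, and `E |S_N| ≥ √(N / 2)` follows by
induction from `E |S_{N+1}| ≥ E |S_N| + P(S_N = 0)` and `P(S_{2k} = 0)² ≥ 1 / (4k + 1)`.
-/

def boolSign (b : Bool) : ℝ := if b then 1 else -1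

def signSum {N : ℕ} (η : Fin N → Bool) : ℝ := ∑ i, boolSign (η i)

def sumAbsSignSum (N : ℕ) : ℝ := ∑ η : Fin N → Bool, |signSum η|

def numBalanced (N : ℕ) : ℕ := #{η : Fin N → Bool | signSum η = 0}

lemma sumAbsSignSum_nonneg (N : ℕ) : 0 ≤ sumAbsSignSum N :=
  sum_nonneg fun _ _ => abs_nonneg _

lemma signSum_comp_perm {N : ℕ} (η : Fin N → Bool) (σ : Equiv.Perm (Fin N)) :
    signSum (η ∘ σ) = signSum η :=
  Equiv.sum_comp σ fun i => boolSign (η i)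

lemma signSum_cons {N : ℕ} (b : Bool) (η : Fin N → Bool) :
    signSum (Fin.cons b η : Fin (N + 1) → Bool) = boolSign b + signSum η := by
  simp [signSum, Fin.sum_univ_succ]

lemma signSum_eq_two_mul_card_sub {N : ℕ} (η : Fin N → Bool) :
    signSum η = 2 * #{i | η i = true} - N := by
  have h (b : Bool) : boolSign b = 2 * (if b = true then 1 else 0) - 1 := by
    cases b <;> norm_num [boolSign]
  simp only [signSum, h, sum_sub_distrib, ← mul_sum, sum_boole]
  simp

lemma sum_boolSign_mul_sign_signSum_eq {N : ℕ} (i j : Fin N) :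
    ∑ η : Fin N → Bool, boolSign (η i) * SignType.sign (signSum η) =
      ∑ η : Fin N → Bool, boolSign (η j) * SignType.sign (signSum η) := by
  rw [← ((Equiv.swap i j).arrowCongr (Equiv.refl Bool)).sum_comp]
  refine sum_congr rfl fun η _ => ?_
  have h : (Equiv.swap i j).arrowCongr (Equiv.refl Bool) η = η ∘ Equiv.swap i j := rfl
  rw [h, signSum_comp_perm, Function.comp_apply, Equiv.swap_apply_left]

lemma natCast_mul_sum_boolSign_mul_sign_signSum {N : ℕ} (i : Fin N) :
    N * ∑ η : Fin N → Bool, boolSign (η i) * SignType.sign (signSum η) =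
      sumAbsSignSum N := by
  calc (N : ℝ) * ∑ η : Fin N → Bool, boolSign (η i) * SignType.sign (signSum η)
      = ∑ j : Fin N, ∑ η : Fin N → Bool, boolSign (η j) * SignType.sign (signSum η) := by
        simp [sum_boolSign_mul_sign_signSum_eq _ i]
    _ = ∑ η : Fin N → Bool, signSum η * SignType.sign (signSum η) := by
        rw [sum_comm]; simp only [signSum, sum_mul]
    _ = sumAbsSignSum N := by simp only [self_mul_sign, sumAbsSignSum]

lemma two_mul_sumAbsSignSum_add_le (N : ℕ) :
    2 * sumAbsSignSum N + 2 * numBalanced N ≤ sumAbsSignSum (N + 1) := by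
  rw [sumAbsSignSum, sumAbsSignSum, numBalanced, ← (Fin.consEquiv fun _ => Bool).sum_comp,
    Fintype.sum_prod_type_right, natCast_card_filter, mul_sum, mul_sum, ← sum_add_distrib]
  refine sum_le_sum fun η _ => ?_
  simp only [Fin.consEquiv, Equiv.coe_fn_mk, signSum_cons, Fintype.sum_bool, boolSign,
    if_true, Bool.false_eq_true, if_false]
  split_ifs with h
  · norm_num [h]
  · calc 2 * |signSum η| + 2 * 0 = |(1 + signSum η) + (-1 + signSum η)| := by
          rw [show (1 + signSum η) + (-1 + signSum η) = 2 * signSum η by ring, abs_mul]; norm_num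
      _ ≤ _ := abs_add_le _ _

lemma centralBinom_le_numBalanced (k : ℕ) : k.centralBinom ≤ numBalanced (2 * k) := by
  rw [Nat.centralBinom_eq_two_mul_choose, numBalanced]
  conv_lhs => rw [← Fintype.card_fin (2 * k), ← card_univ, ← card_powersetCard]
  refine card_le_card_of_injOn (fun s i => decide (i ∈ s)) (fun s hs => ?_) (fun s _ t _ h => ?_)
  · simp only [mem_coe, mem_powersetCard] at hs
    simp [signSum_eq_two_mul_card_sub, hs]
  · ext i; simpa using congrFun h i

lemma sixteen_pow_le_mul_centralBinom_sq (k : ℕ) :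
    16 ^ k ≤ (4 * k + 1) * k.centralBinom ^ 2 := by
  induction k with
  | zero => simp
  | succ k ih =>
    have h := Nat.succ_mul_centralBinom_succ k
    refine Nat.le_of_mul_le_mul_left ?_ (by positivity : 0 < (k + 1) ^ 2)
    calc (k + 1) ^ 2 * 16 ^ (k + 1) ≤ 16 * (k + 1) ^ 2 * ((4 * k + 1) * k.centralBinom ^ 2) := by
          rw [pow_succ 16 k]; nlinarith [ih]
      _ ≤ (4 * k + 5) * (2 * (2 * k + 1) * k.centralBinom) ^ 2 := by
          nlinarith [Nat.zero_le (k.centralBinom ^ 2)]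
      _ = (k + 1) ^ 2 * ((4 * (k + 1) + 1) * (k + 1).centralBinom ^ 2) := by
          rw [← h]; ring

/- From `(2bc)² ≥ 4akc² ≥ a (a - c²)` and `a ≥ a - c²`: `2bc ≥ a - c²`. -/
lemma mul_add_one_le_sq_add {a b c k : ℝ} (hb : 0 ≤ b) (hc : 0 ≤ c) (hbk : a * k ≤ b ^ 2)
    (hck : a ≤ (4 * k + 1) * c ^ 2) : a * (k + 1) ≤ (b + c) ^ 2 := by
  nlinarith [sq_nonneg (2 * b * c - a + c ^ 2), mul_nonneg hb hc]

lemma sixteen_pow_mul_add_one_le_sq (k : ℕ) (h : 16 ^ k * k ≤ sumAbsSignSum (2 * k) ^ 2) :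
    16 ^ k * (k + 1) ≤ (sumAbsSignSum (2 * k) + numBalanced (2 * k)) ^ 2 := by
  refine mul_add_one_le_sq_add (sumAbsSignSum_nonneg _) (Nat.cast_nonneg _) h ?_
  exact_mod_cast (sixteen_pow_le_mul_centralBinom_sq k).trans
    (Nat.mul_le_mul_left _ (Nat.pow_le_pow_left (centralBinom_le_numBalanced k) 2))

lemma sixteen_pow_mul_le_sumAbsSignSum_sq (k : ℕ) :
    16 ^ k * k ≤ sumAbsSignSum (2 * k) ^ 2 := by
  induction k with
  | zero => simpa using sq_nonneg (sumAbsSignSum 0)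
  | succ k ih =>
    have h₁ := two_mul_sumAbsSignSum_add_le (2 * k)
    have h₂ := two_mul_sumAbsSignSum_add_le (2 * k + 1)
    have h₃ := sixteen_pow_mul_add_one_le_sq k ih
    have h₄ : 4 * (sumAbsSignSum (2 * k) + numBalanced (2 * k)) ≤
        sumAbsSignSum (2 * k + 1 + 1) := by
      have : (0 : ℝ) ≤ numBalanced (2 * k + 1) := Nat.cast_nonneg _
      linarith
    have h₅ : 0 ≤ sumAbsSignSum (2 * k) + numBalanced (2 * k) :=
      add_nonneg (sumAbsSignSum_nonneg _) (Nat.cast_nonneg _)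
    calc (16 : ℝ) ^ (k + 1) * ↑(k + 1) = 16 * (16 ^ k * (k + 1)) := by push_cast; ring
      _ ≤ (4 * (sumAbsSignSum (2 * k) + numBalanced (2 * k))) ^ 2 := by nlinarith
      _ ≤ _ := pow_le_pow_left₀ (by positivity) h₄ 2

lemma four_pow_mul_le_two_mul_sumAbsSignSum_sq (N : ℕ) :
    4 ^ N * N ≤ 2 * sumAbsSignSum N ^ 2 := by
  obtain ⟨k, rfl | rfl⟩ := N.even_or_odd'
  · have := sixteen_pow_mul_le_sumAbsSignSum_sq k
    rw [pow_mul]; push_cast; norm_num; linarith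
  · have h₁ := two_mul_sumAbsSignSum_add_le (2 * k)
    have h₂ := sixteen_pow_mul_add_one_le_sq k (sixteen_pow_mul_le_sumAbsSignSum_sq k)
    have h₃ : 0 ≤ sumAbsSignSum (2 * k) + numBalanced (2 * k) :=
      add_nonneg (sumAbsSignSum_nonneg _) (Nat.cast_nonneg _)
    have h₄ : (0 : ℝ) < 16 ^ k := by positivity
    calc (4 : ℝ) ^ (2 * k + 1) * ↑(2 * k + 1) ≤ 8 * (16 ^ k * (k + 1)) := by
          rw [pow_succ, pow_mul]; push_cast; norm_num; nlinarith
      _ ≤ 2 * (2 * (sumAbsSignSum (2 * k) + numBalanced (2 * k))) ^ 2 := by nlinarith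
      _ ≤ 2 * sumAbsSignSum (2 * k + 1) ^ 2 := by gcongr; linarith

lemma mul_sign_le_abs (x y : ℝ) : x * SignType.sign y ≤ |x| := by
  rcases lt_trichotomy y 0 with h | rfl | h
  · simpa [sign_neg h] using neg_le_abs x
  · simp
  · simpa [sign_pos h] using le_abs_self x

theorem sum_mul_two_pow_div_sqrt_le_sum_abs {N : ℕ} (a : Fin N → ℝ) (ha : ∀ i, 0 ≤ a i) :
    (∑ i, a i) * 2 ^ N / √(2 * N) ≤
      ∑ η : Fin N → Bool, |∑ i, a i * boolSign (η i)| := by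
  rcases Nat.eq_zero_or_pos N with rfl | hN
  · simp
  have hN' : (0 : ℝ) < N := Nat.cast_pos.mpr hN
  set B := sumAbsSignSum N
  have hB : 2 ^ N / √(2 * N) ≤ B / N := by
    rw [div_le_div_iff₀ (by positivity) hN']
    have hB₀ : 0 ≤ B := sumAbsSignSum_nonneg N
    refine (pow_le_pow_iff_left₀ (by positivity) (by positivity) two_ne_zero).mp ?_
    rw [mul_pow, mul_pow, Real.sq_sqrt (by positivity), ← pow_mul, mul_comm N 2, pow_mul]
    have := mul_le_mul_of_nonneg_right (four_pow_mul_le_two_mul_sumAbsSignSum_sq N) hN'.le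
    norm_num
    linarith
  have hcol (i : Fin N) :
      ∑ η : Fin N → Bool, boolSign (η i) * SignType.sign (signSum η) = B / N := by
    rw [eq_div_iff hN'.ne', mul_comm, natCast_mul_sum_boolSign_mul_sign_signSum]
  calc (∑ i, a i) * 2 ^ N / √(2 * N) = (∑ i, a i) * (2 ^ N / √(2 * N)) := by ring
    _ ≤ (∑ i, a i) * (B / N) := by gcongr; exact sum_nonneg fun i _ => ha i
    _ = ∑ i, a i * ∑ η : Fin N → Bool, boolSign (η i) * SignType.sign (signSum η) := by
        simp only [hcol, sum_mul]
    _ = ∑ η : Fin N → Bool, (∑ i, a i * boolSign (η i)) * SignType.sign (signSum η) := by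
        simp only [mul_sum, sum_mul, mul_assoc]
        exact sum_comm
    _ ≤ ∑ η : Fin N → Bool, |∑ i, a i * boolSign (η i)| :=
        sum_le_sum fun η _ => mul_sign_le_abs _ _

lemma inner_eq_sum_mul {d : ℕ} (s x : EV d) : ⟪s, x⟫ = ∑ j, s j * x j := by
  simp [PiLp.inner_apply, mul_comm]

lemma cornerVec_apply {N d : ℕ} (G : ℝ) (ε : Fin N → Fin d → Bool) (i : Fin N)
    (j : Fin d) :
    cornerVec d N G ε i j = boolSign (ε i j) * (G / √d) := rfl

def flipRow {N d : ℕ} (i : Fin N) (ε : Fin N → Fin d → Bool) : Fin N → Fin d → Bool :=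
  Function.update ε i fun j => !ε i j

lemma flipRow_involutive {N d : ℕ} (i : Fin N) : Function.Involutive (flipRow (d := d) i) := by
  intro ε
  simp [flipRow]

lemma cornerVec_flipRow {N d : ℕ} (G : ℝ) (i : Fin N) (ε : Fin N → Fin d → Bool) :
    cornerVec d N G (flipRow i ε) =
      Function.update (cornerVec d N G ε) i (-cornerVec d N G ε i) := by
  funext k
  rcases eq_or_ne k i with rfl | hk
  · ext j; cases h : ε k j <;> simp [cornerVec_apply, flipRow, boolSign, h]
  · simp [hk, cornerVec, flipRow]

lemma sum_inner_cornerVec_eq_zero {N d : ℕ} (G : ℝ) (i : Fin N) (Y : (Fin N → EV d) → EV d)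
    (hY : ∀ w v, Y (Function.update w i v) = Y w) :
    ∑ ε : Fin N → Fin d → Bool, ⟪cornerVec d N G ε i, Y (cornerVec d N G ε)⟫ = 0 := by
  have h := Equiv.sum_comp (flipRow_involutive (d := d) i).toPerm
    fun ε => ⟪cornerVec d N G ε i, Y (cornerVec d N G ε)⟫
  simp only [Function.Involutive.coe_toPerm, cornerVec_flipRow, hY, Function.update_self,
    inner_neg_left, sum_neg_distrib] at h
  linarith

lemma isLeast_inner_box {d : ℕ} (s : EV d) {r : ℝ} (hr : 0 ≤ r) :
    IsLeast ((fun x : EV d => ⟪s, x⟫) '' {x | ∀ j, |x j| ≤ r}) (-(r * ∑ j, |s j|)) := by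
  refine ⟨⟨WithLp.toLp 2 fun j => if 0 ≤ s j then -r else r, fun j => ?_, ?_⟩, ?_⟩
  · rcases le_or_gt 0 (s j) with h | h <;> simp [h, abs_of_nonneg hr, not_le.mpr]
  · simp only [inner_eq_sum_mul, mul_sum, ← sum_neg_distrib]
    refine sum_congr rfl fun j _ => ?_
    split_ifs with h
    · simp [abs_of_nonneg h]; ring
    · simp [abs_of_neg (not_le.mp h)]; ring
  · rintro _ ⟨x, hx, rfl⟩
    simp only [inner_eq_sum_mul, mul_sum, ← sum_neg_distrib]
    refine sum_le_sum fun j _ => ?_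
    have := mul_le_mul_of_nonneg_left (hx j) (abs_nonneg (s j))
    rw [← abs_mul] at this
    linarith [neg_abs_le (s j * x j)]

lemma sum_sum_apply_transpose {ι κ γ : Type*} [Fintype ι] [Fintype κ] [Fintype γ]
    [DecidableEq ι] [DecidableEq κ] (f : (ι → γ) → ℝ) :
    ∑ ε : ι → κ → γ, ∑ j, f (fun i => ε i j) =
      Fintype.card κ * Fintype.card (ι → γ) ^ (Fintype.card κ - 1) * ∑ η, f η := by
  rw [← (Equiv.piComm fun (_ : κ) (_ : ι) => γ).sum_comp, sum_comm]
  simp [Equiv.piComm, ← Fintype.piFinset_univ, Fintype.sum_piFinset_apply, mul_assoc]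

lemma sum_sum_sum_inner_cornerVec_eq_zero {N d : ℕ} (A G : ℝ) (s : Fin N → Finset ℕ)
    (X : ℕ → (Fin N → EV d) → EV d)
    (hX : ∀ i, ∀ t ∈ s i, ∀ w v, X t (Function.update w i v) = X t w) :
    ∑ ε : Fin N → Fin d → Bool, ∑ i, ∑ t ∈ s i,
      A * ⟪cornerVec d N G ε i, X t (cornerVec d N G ε)⟫ = 0 := by
  rw [sum_comm]
  refine sum_eq_zero fun i _ => ?_
  rw [sum_comm]
  refine sum_eq_zero fun t ht => ?_
  rw [← mul_sum, sum_inner_cornerVec_eq_zero G i (X t) (hX i t ht), mul_zero]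

lemma sInf_weightedLoss_box {N d : ℕ} (A G : ℝ) {r : ℝ} (hr : 0 ≤ r) (L : Fin N → ℝ)
    (ε : Fin N → Fin d → Bool) :
    sInf ((fun x : EV d => ∑ i, L i * (A * ⟪cornerVec d N G ε i, x⟫)) ''
        {x | ∀ j, |x j| ≤ r}) =
      -(r * |A * (G / √d)| * ∑ j, |∑ i, L i * boolSign (ε i j)|) := by
  have h : (fun x : EV d => ∑ i, L i * (A * ⟪cornerVec d N G ε i, x⟫)) =
      fun x => ⟪∑ i, (L i * A) • cornerVec d N G ε i, x⟫ := by
    funext x; simp [sum_inner, real_inner_smul_left, mul_assoc]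
  have hs (j : Fin d) : (∑ i, (L i * A) • cornerVec d N G ε i) j =
      A * (G / √d) * ∑ i, L i * boolSign (ε i j) := by
    simp only [WithLp.ofLp_sum, WithLp.ofLp_smul, Finset.sum_apply, Pi.smul_apply, smul_eq_mul,
      cornerVec_apply, mul_sum]
    exact sum_congr rfl fun i _ => by ring
  rw [h, (isLeast_inner_box _ hr).csInf_eq]
  simp only [hs, abs_mul]
  rw [← mul_sum]
  ring

theorem regret_lower_bound {N d : ℕ} (hd : d ≠ 0) (A G R : ℝ) (hR : 0 ≤ R)
    (L : Fin N → ℝ) (hL : ∀ i, 0 ≤ L i) (s : Fin N → Finset ℕ)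
    (X : ℕ → (Fin N → EV d) → EV d)
    (hX : ∀ i, ∀ t ∈ s i, ∀ w v, X t (Function.update w i v) = X t w) :
    R * |A * G| * (∑ i, L i) * 2 ^ (N * d) / √(2 * N) ≤
      ∑ ε : Fin N → Fin d → Bool,
        (∑ i, ∑ t ∈ s i, A * ⟪cornerVec d N G ε i, X t (cornerVec d N G ε)⟫ -
          sInf ((fun x : EV d => ∑ i, L i * (A * ⟪cornerVec d N G ε i, x⟫)) ''
            {x | ∀ j, |x j| ≤ R / √d})) := by
  rw [sum_sub_distrib, sum_sum_sum_inner_cornerVec_eq_zero A G s X hX, zero_sub]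
  simp only [sInf_weightedLoss_box A G (by positivity : 0 ≤ R / √d), sum_neg_distrib, neg_neg,
    ← mul_sum]
  rw [sum_sum_apply_transpose fun η => |∑ i, L i * boolSign (η i)|]
  simp only [Fintype.card_fin, Fintype.card_fun, Fintype.card_bool]
  have hpow : (2 : ℝ) ^ (N * d) = (2 ^ N) ^ (d - 1) * 2 ^ N := by
    rw [← pow_succ, ← pow_mul, Nat.sub_add_cancel (Nat.one_le_iff_ne_zero.mpr hd)]
  calc R * |A * G| * (∑ i, L i) * 2 ^ (N * d) / √(2 * N)
      = R / √d * |A * (G / √d)| *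
          (d * (2 ^ N) ^ (d - 1) * ((∑ i, L i) * 2 ^ N / √(2 * N))) := by
        simp only [hpow, abs_mul, abs_div, abs_of_nonneg (Real.sqrt_nonneg _)]
        field_simp
        rw [Real.sq_sqrt (Nat.cast_nonneg d)]
    _ ≤ _ := by
        push_cast
        gcongr
        exact sum_mul_two_pow_div_sqrt_le_sum_abs L hL

lemma blockEndpoint_le_succ {C K' Z T : ℕ} {c cc : ℕ → ℕ} (hZ : Z * K' ≤ C)
    (hcmono : ∀ j, j < C → c j < c (j + 1)) (hcT : c C < T)
    (hccle : ∀ i, i ≤ Z → cc i = c (i * K')) (hccZ : cc (Z + 1) = T) {i : ℕ}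
    (hi : i ≤ Z) :
    cc i ≤ cc (i + 1) := by
  have hc : MonotoneOn c (Set.Iic C) := monotoneOn_of_le_succ Set.ordConnected_Iic
    fun j _ _ hj => (hcmono j (Order.succ_le_iff.mp hj)).le
  have hiC : i * K' ≤ C := (Nat.mul_le_mul_right K' hi).trans hZ
  rcases hi.lt_or_eq with hi | rfl
  · rw [hccle i hi.le, hccle (i + 1) hi]
    exact hc hiC ((Nat.mul_le_mul_right K' hi).trans hZ) (Nat.mul_le_mul_right K' (Nat.le_succ i))
  · rw [hccle i le_rfl, hccZ]
    exact (hc hiC (le_refl C) hiC).trans hcT.le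

theorem statement_5 (d C T n K' Z : ℕ)
    (hd : 1 ≤ d) (hZ : Z = C / K')
    (R G : ℝ) (hR : 0 < R)
    (c : ℕ → ℕ) (hc0 : c 0 = 0) (hcmono : ∀ j, j < C → c j < c (j + 1)) (hcT : c C < T)
    (cc : ℕ → ℕ) (hccle : ∀ i, i ≤ Z → cc i = c (i * K')) (hccZ : cc (Z + 1) = T)
    (Kset : Set (EV d))
    (hKset : Kset = {x : EV d | ∀ j, |x j| ≤ R / Real.sqrt d})
    -- delayed decision rule: in interval i, the decision depends only on w_0,…,w_{i−1}
    (X : ℕ → (Fin (Z + 1) → EV d) → EV d)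
    (hXdelay : ∀ i : Fin (Z + 1), ∀ t, cc i < t → t ≤ cc ((i : ℕ) + 1) →
        ∀ w w' : Fin (Z + 1) → EV d,
          (∀ j : Fin (Z + 1), (j : ℕ) < (i : ℕ) → w j = w' j) → X t w = X t w') :
    -- expected regret lower bound
    ((n : ℝ) - 2 * K' + 1) * R * G * T / Real.sqrt (2 * (Z + 1)) ≤
      (∑ ε : Fin (Z + 1) → Fin d → Bool,
          ((∑ i : Fin (Z + 1), ∑ t ∈ Finset.Ioc (cc i) (cc ((i : ℕ) + 1)),
              ((n : ℝ) - 2 * K' + 1) * ⟪cornerVec d (Z + 1) G ε i, X t (cornerVec d (Z + 1) G ε)⟫)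
            - sInf ((fun x : EV d => ∑ i : Fin (Z + 1),
                ((cc ((i : ℕ) + 1) : ℝ) - (cc i : ℝ)) *
                  (((n : ℝ) - 2 * K' + 1) * ⟪cornerVec d (Z + 1) G ε i, x⟫)) '' Kset)))
        / 2 ^ ((Z + 1) * d) := by
  subst hKset
  set A : ℝ := (n : ℝ) - 2 * K' + 1
  have hL (i : Fin (Z + 1)) : (0 : ℝ) ≤ (cc ((i : ℕ) + 1) : ℝ) - cc i :=
    sub_nonneg.mpr (Nat.cast_le.mpr (blockEndpoint_le_succ (hZ ▸ Nat.div_mul_le_self C K')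
      hcmono hcT hccle hccZ i.is_le))
  have hLsum : ∑ i : Fin (Z + 1), ((cc ((i : ℕ) + 1) : ℝ) - cc i) = T := by
    rw [Fin.sum_univ_eq_sum_range (fun i => (cc (i + 1) : ℝ) - cc i),
      sum_range_sub (fun i => (cc i : ℝ)), hccZ, hccle 0 (Nat.zero_le Z), zero_mul, hc0,
      Nat.cast_zero, sub_zero]
  have hX (i : Fin (Z + 1)) (t : ℕ) (ht : t ∈ Ioc (cc i) (cc ((i : ℕ) + 1)))
      (w : Fin (Z + 1) → EV d) (v : EV d) : X t (Function.update w i v) = X t w :=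
    hXdelay i t (mem_Ioc.mp ht).1 (mem_Ioc.mp ht).2 _ _ fun j hj =>
      Function.update_of_ne (Fin.ne_of_lt hj) _ _
  have key := regret_lower_bound (by omega) A G R hR.le _ hL _ X hX
  rw [hLsum] at key
  push_cast at key
  rw [le_div_iff₀ (by positivity)]
  calc A * R * G * T / √(2 * (Z + 1)) * 2 ^ ((Z + 1) * d)
      = R * (A * G) * T * 2 ^ ((Z + 1) * d) / √(2 * (Z + 1)) := by ring
    _ ≤ R * |A * G| * T * 2 ^ ((Z + 1) * d) / √(2 * (Z + 1)) := by
        gcongr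
        exact le_abs_self _
    _ ≤ _ := key
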